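/- Let X and Y be finite sets and let {μ_n}_{n∈ℕ} and {ν_n}_{n∈ℕ} be sequences of probability mass functions on X^n × Y^n. If there exist β₁ > 0 and n₁ ∈ ℕ such that ‖μ_n − ν_n‖_TV ≤ e^{−n β₁} for all n > n₁, then there exist β₂ > 0 and n₂ ∈ ℕ such that |I_{μ_n}(X^n; Y^n) − I_{ν_n}(X^n; Y^n)| ≤ e^{−n β₂} for all n > n₂. -/
import Mathlib


open scoped BigOperators

/-- Total variation distance between two PMFs on a finite set. -/
noncomputable def tvDist {Ω : Type*} [Fintype Ω] (p q : Ω → ℝ) : ℝ :=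
  (1 / 2) * ∑ x, |p x - q x|

/-- `p` is a probability mass function on the finite set `Ω`. -/
def IsPMF {Ω : Type*} [Fintype Ω] (p : Ω → ℝ) : Prop := (∀ x, 0 ≤ p x) ∧ ∑ x, p x = 1

/-- Relative entropy `D(p‖q) = Σ_{x : p x > 0} p x * log (p x / q x)`. -/
noncomputable def relEnt {Ω : Type*} [Fintype Ω] (p q : Ω → ℝ) : ℝ :=
  ∑ x, if 0 < p x then p x * Real.log (p x / q x) else 0

/-- First marginal of a joint PMF on `A × B`. -/
noncomputable def margFst {A B : Type*} [Fintype A] [Fintype B] (μ : A × B → ℝ) : A → ℝ :=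
  fun a => ∑ b, μ (a, b)

/-- Second marginal of a joint PMF on `A × B`. -/
noncomputable def margSnd {A B : Type*} [Fintype A] [Fintype B] (μ : A × B → ℝ) : B → ℝ :=
  fun b => ∑ a, μ (a, b)

/-- Mutual information of a joint PMF `μ` on `A × B`:
`I_μ(A;B) = D(μ ‖ μ_A ⊗ μ_B)`. -/
noncomputable def mutInf {A B : Type*} [Fintype A] [Fintype B] (μ : A × B → ℝ) : ℝ :=
  relEnt μ (fun ab => margFst μ ab.1 * margSnd μ ab.2)

namespace TVMutInfAux

open Real

/-- Shannon entropy (in nats). -/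
noncomputable def ent {Ω : Type*} [Fintype Ω] (p : Ω → ℝ) : ℝ := ∑ x, Real.negMulLog (p x)

/-- Tangent line bound for `negMulLog` at a point `a > 0`. -/
lemma tangent_bound {a d : ℝ} (ha : 0 < a) (hd : 0 ≤ d) :
    negMulLog d ≤ negMulLog a + (-Real.log a - 1) * (d - a) := by
  rcases eq_or_lt_of_le hd with h | h
  · simp only [← h, negMulLog_zero, negMulLog]
    nlinarith
  · have h1 : Real.log (a / d) ≤ a / d - 1 := Real.log_le_sub_one_of_pos (by positivity)
    rw [Real.log_div ha.ne' h.ne'] at h1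
    have h2 : (a / d - 1) * d = a - d := by field_simp
    have h3 : (Real.log a - Real.log d) * d ≤ a - d := by
      rw [← h2]; exact mul_le_mul_of_nonneg_right h1 h.le
    simp only [negMulLog]
    nlinarith

/-- `negMulLog` is monotone on `[0, e⁻¹]`. -/
lemma negMulLog_mono {s t : ℝ} (hs : 0 ≤ s) (hst : s ≤ t) (ht : t ≤ Real.exp (-1)) :
    negMulLog s ≤ negMulLog t := by
  rcases eq_or_lt_of_le hs with h | h
  · rw [← h, negMulLog_zero]
    have : Real.exp (-1) ≤ 1 := by
      rw [show (1:ℝ) = Real.exp 0 by simp]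
      exact Real.exp_le_exp.mpr (by norm_num)
    exact negMulLog_nonneg (hs.trans hst) (ht.trans this)
  · have htpos : 0 < t := lt_of_lt_of_le h hst
    have h1 : Real.log (t / s) ≤ t / s - 1 := Real.log_le_sub_one_of_pos (by positivity)
    rw [Real.log_div htpos.ne' h.ne'] at h1
    have h3 : (Real.log t - Real.log s) * s ≤ t - s := by
      have h2 : (t / s - 1) * s = t - s := by field_simp
      rw [← h2]; exact mul_le_mul_of_nonneg_right h1 h.le
    have h4 : Real.log t ≤ -1 := by
      calc Real.log t ≤ Real.log (Real.exp (-1)) := Real.log_le_log htpos ht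
        _ = -1 := Real.log_exp _
    simp only [negMulLog]
    nlinarith

/-- Jensen-type bound via the tangent line. -/
lemma sum_negMulLog_le {Ω : Type*} [Fintype Ω] (d : Ω → ℝ) (hd : ∀ x, 0 ≤ d x)
    (hS : 0 < ∑ x, d x) :
    ∑ x, negMulLog (d x) ≤
      (∑ x, d x) * Real.log (Fintype.card Ω) - (∑ x, d x) * Real.log (∑ x, d x) := by
  set S := ∑ x, d x with hSdef
  have hne : Nonempty Ω := by
    by_contra h
    rw [not_nonempty_iff] at h
    rw [hSdef, Finset.univ_eq_empty, Finset.sum_empty] at hS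
    exact lt_irrefl _ hS
  have hK : (0:ℝ) < Fintype.card Ω := by
    have := Fintype.card_pos (α := Ω)
    exact_mod_cast this
  set K : ℝ := (Fintype.card Ω : ℝ) with hKdef
  have ha : 0 < S / K := by positivity
  have h1 : ∀ x, negMulLog (d x) ≤ negMulLog (S / K) + (-Real.log (S/K) - 1) * (d x - S/K) :=
    fun x => tangent_bound ha (hd x)
  calc ∑ x, negMulLog (d x)
      ≤ ∑ x, (negMulLog (S / K) + (-Real.log (S/K) - 1) * (d x - S/K)) :=
        Finset.sum_le_sum (fun x _ => h1 x)
    _ = K * negMulLog (S / K) + (-Real.log (S/K) - 1) * (S - K * (S/K)) := by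
        rw [Finset.sum_add_distrib, Finset.sum_const, ← Finset.mul_sum, Finset.card_univ]
        rw [Finset.sum_sub_distrib, Finset.sum_const, Finset.card_univ]
        ring
    _ = S * Real.log K - S * Real.log S := by
        rw [negMulLog, Real.log_div (ne_of_gt hS) (ne_of_gt hK)]
        field_simp
        ring

/-- Pointwise difference bound for `negMulLog` on `[0,1]`. -/
lemma negMulLog_diff {s t : ℝ} (hs0 : 0 ≤ s) (hs1 : s ≤ 1) (ht0 : 0 ≤ t) (ht1 : t ≤ 1) :
    |negMulLog t - negMulLog s| ≤ |t - s| + negMulLog |t - s| := by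
  have aux : ∀ s t : ℝ, 0 ≤ s → s ≤ t → t ≤ 1 →
      |negMulLog t - negMulLog s| ≤ (t - s) + negMulLog (t - s) := by
    intro s t hs hst ht1
    have hd : 0 ≤ t - s := sub_nonneg.mpr hst
    have hphi : 0 ≤ negMulLog (t - s) := negMulLog_nonneg hd (by linarith)
    rw [abs_sub_le_iff]
    constructor
    · have sub : negMulLog t ≤ negMulLog s + negMulLog (t - s) := by
        rcases eq_or_lt_of_le hs with h | h
        · rw [← h, negMulLog_zero, sub_zero]; simp
        rcases eq_or_lt_of_le hd with h2 | h2
        · rw [← h2, negMulLog_zero]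
          have : t = s := by linarith
          simp [this]
        have htpos : 0 < t := by linarith
        have e1 : Real.log s ≤ Real.log t := Real.log_le_log h hst
        have e2 : Real.log (t - s) ≤ Real.log t := Real.log_le_log h2 (by linarith)
        simp only [negMulLog]
        nlinarith
      linarith
    · have : negMulLog s - negMulLog t ≤ t - s := by
        rcases eq_or_lt_of_le hs with h | h
        · rw [← h, negMulLog_zero]
          have : negMulLog t ≥ 0 := negMulLog_nonneg (by linarith) ht1
          linarith
        have htpos : 0 < t := by linarith
        have h1 : Real.log (t / s) ≤ t / s - 1 := Real.log_le_sub_one_of_pos (by positivity)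
        rw [Real.log_div htpos.ne' h.ne'] at h1
        have h3 : (Real.log t - Real.log s) * s ≤ t - s := by
          have h2 : (t / s - 1) * s = t - s := by field_simp
          rw [← h2]; exact mul_le_mul_of_nonneg_right h1 h.le
        have h4 : Real.log t ≤ 0 := Real.log_nonpos htpos.le ht1
        simp only [negMulLog]
        nlinarith
      linarith
  rcases le_total s t with h | h
  · have := aux s t hs0 h ht1
    rwa [abs_of_nonneg (sub_nonneg.mpr h)]
  · have := aux t s ht0 h hs1
    rw [abs_sub_comm, abs_sub_comm t s]
    rwa [abs_of_nonneg (sub_nonneg.mpr h)]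

/-- Entropy difference bound in terms of ℓ¹ distance. -/
lemma ent_diff_le {Ω : Type*} [Fintype Ω] (p q : Ω → ℝ)
    (hp0 : ∀ x, 0 ≤ p x) (hp1 : ∀ x, p x ≤ 1) (hq0 : ∀ x, 0 ≤ q x) (hq1 : ∀ x, q x ≤ 1) :
    |ent p - ent q| ≤ (∑ x, |p x - q x|) + (∑ x, |p x - q x|) * Real.log (Fintype.card Ω)
      - (∑ x, |p x - q x|) * Real.log (∑ x, |p x - q x|) := by
  set S := ∑ x, |p x - q x| with hSdef
  have step1 : |ent p - ent q| ≤ S + ∑ x, negMulLog |p x - q x| := by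
    have : |ent p - ent q| ≤ ∑ x, |negMulLog (p x) - negMulLog (q x)| := by
      rw [ent, ent, ← Finset.sum_sub_distrib]
      exact Finset.abs_sum_le_sum_abs _ _
    refine this.trans ?_
    rw [hSdef, ← Finset.sum_add_distrib]
    exact Finset.sum_le_sum fun x _ => negMulLog_diff (hq0 x) (hq1 x) (hp0 x) (hp1 x)
  rcases eq_or_lt_of_le (Finset.sum_nonneg (fun x _ => abs_nonneg (p x - q x)) : (0:ℝ) ≤ S)
    with h | h
  · have hz : ∀ x ∈ Finset.univ, |p x - q x| = 0 := by
      intro x hx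
      exact (Finset.sum_eq_zero_iff_of_nonneg (fun x _ => abs_nonneg _)).1 h.symm x hx
    have : ∑ x, negMulLog |p x - q x| = 0 := by
      apply Finset.sum_eq_zero
      intro x hx; rw [hz x hx, negMulLog_zero]
    have hS0 : S = 0 := by rw [hSdef, ← h]
    rw [hS0] at step1 ⊢
    rw [this] at step1
    simpa using step1
  · have := sum_negMulLog_le (fun x => |p x - q x|) (fun x => abs_nonneg _) (by rwa [← hSdef])
    rw [← hSdef] at this
    linarith

/-- Mutual information decomposed into entropies. -/
lemma mutInf_eq_ent {A B : Type*} [Fintype A] [Fintype B] (μ : A × B → ℝ)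
    (h0 : ∀ ab, 0 ≤ μ ab) :
    mutInf μ = ent (margFst μ) + ent (margSnd μ) - ent μ := by
  have key : ∀ ab : A × B,
      (if 0 < μ ab then μ ab * Real.log (μ ab / (margFst μ ab.1 * margSnd μ ab.2)) else 0)
      = μ ab * Real.log (μ ab) - μ ab * Real.log (margFst μ ab.1)
        - μ ab * Real.log (margSnd μ ab.2) := by
    intro ab
    by_cases h : 0 < μ ab
    · have hA : 0 < margFst μ ab.1 := by
        have : μ (ab.1, ab.2) ≤ margFst μ ab.1 :=
          Finset.single_le_sum (f := fun b => μ (ab.1, b)) (fun b _ => h0 _) (Finset.mem_univ ab.2)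
        simpa using lt_of_lt_of_le h this
      have hB : 0 < margSnd μ ab.2 := by
        have : μ (ab.1, ab.2) ≤ margSnd μ ab.2 :=
          Finset.single_le_sum (f := fun a => μ (a, ab.2)) (fun a _ => h0 _) (Finset.mem_univ ab.1)
        simpa using lt_of_lt_of_le h this
      rw [if_pos h, Real.log_div h.ne' (by positivity), Real.log_mul hA.ne' hB.ne']
      ring
    · have hz : μ ab = 0 := le_antisymm (not_lt.mp h) (h0 ab)
      rw [if_neg h, hz]
      ring
  rw [mutInf, relEnt]
  simp only [key]
  rw [Finset.sum_sub_distrib, Finset.sum_sub_distrib]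
  have e1 : ∑ ab : A × B, μ ab * Real.log (μ ab) = - ent μ := by
    rw [ent, ← Finset.sum_neg_distrib]
    exact Finset.sum_congr rfl fun ab _ => by rw [negMulLog]; ring
  have e2 : ∑ ab : A × B, μ ab * Real.log (margFst μ ab.1) = - ent (margFst μ) := by
    rw [ent, ← Finset.sum_neg_distrib, Fintype.sum_prod_type]
    refine Finset.sum_congr rfl fun a _ => ?_
    simp only [Prod.fst]
    rw [← Finset.sum_mul]
    rw [show ∑ b, μ (a, b) = margFst μ a from rfl, negMulLog]
    ring
  have e3 : ∑ ab : A × B, μ ab * Real.log (margSnd μ ab.2) = - ent (margSnd μ) := by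
    rw [ent, ← Finset.sum_neg_distrib, Fintype.sum_prod_type_right]
    refine Finset.sum_congr rfl fun b _ => ?_
    simp only [Prod.snd]
    rw [← Finset.sum_mul]
    rw [show ∑ a, μ (a, b) = margSnd μ b from rfl, negMulLog]
    ring
  rw [e1, e2, e3]
  ring

lemma isPMF_margFst {A B : Type*} [Fintype A] [Fintype B] {μ : A × B → ℝ} (h : IsPMF μ) :
    IsPMF (margFst μ) := by
  refine ⟨fun a => Finset.sum_nonneg fun b _ => h.1 _, ?_⟩
  rw [show ∑ a, margFst μ a = ∑ a, ∑ b, μ (a, b) from rfl, ← Fintype.sum_prod_type]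
  exact h.2

lemma isPMF_margSnd {A B : Type*} [Fintype A] [Fintype B] {μ : A × B → ℝ} (h : IsPMF μ) :
    IsPMF (margSnd μ) := by
  refine ⟨fun b => Finset.sum_nonneg fun a _ => h.1 _, ?_⟩
  rw [show ∑ b, margSnd μ b = ∑ b, ∑ a, μ (a, b) from rfl, ← Fintype.sum_prod_type_right]
  exact h.2

lemma pmf_le_one {Ω : Type*} [Fintype Ω] {p : Ω → ℝ} (h : IsPMF p) (x : Ω) : p x ≤ 1 := by
  rw [← h.2]
  exact Finset.single_le_sum (fun y _ => h.1 y) (Finset.mem_univ x)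

lemma tv_margFst {A B : Type*} [Fintype A] [Fintype B] (μ ν : A × B → ℝ) :
    ∑ a, |margFst μ a - margFst ν a| ≤ ∑ ab : A × B, |μ ab - ν ab| := by
  rw [Fintype.sum_prod_type]
  refine Finset.sum_le_sum fun a _ => ?_
  rw [show margFst μ a - margFst ν a = ∑ b, (μ (a, b) - ν (a, b)) by
    rw [Finset.sum_sub_distrib]; rfl]
  exact Finset.abs_sum_le_sum_abs _ _

lemma tv_margSnd {A B : Type*} [Fintype A] [Fintype B] (μ ν : A × B → ℝ) :
    ∑ b, |margSnd μ b - margSnd ν b| ≤ ∑ ab : A × B, |μ ab - ν ab| := by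
  rw [Fintype.sum_prod_type_right]
  refine Finset.sum_le_sum fun b _ => ?_
  rw [show margSnd μ b - margSnd ν b = ∑ a, (μ (a, b) - ν (a, b)) by
    rw [Finset.sum_sub_distrib]; rfl]
  exact Finset.abs_sum_le_sum_abs _ _

/-- Uniform entropy-difference bound. -/
lemma ent_diff_bound {Ω : Type*} [Fintype Ω] {p q : Ω → ℝ} (hp : IsPMF p) (hq : IsPMF q)
    {Kb S₀ : ℝ} (hK1 : 1 ≤ Kb) (hcard : (Fintype.card Ω : ℝ) ≤ Kb)
    (hS : ∑ x, |p x - q x| ≤ S₀) (hS0 : 0 < S₀) (hS₀e : S₀ ≤ Real.exp (-1)) :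
    |ent p - ent q| ≤ S₀ + S₀ * Real.log Kb - S₀ * Real.log S₀ := by
  have base := ent_diff_le p q hp.1 (pmf_le_one hp) hq.1 (pmf_le_one hq)
  set S := ∑ x, |p x - q x| with hSdef
  have hSnn : 0 ≤ S := Finset.sum_nonneg fun x _ => abs_nonneg _
  have hlogKb : 0 ≤ Real.log Kb := Real.log_nonneg hK1
  have t1 : S * Real.log (Fintype.card Ω) ≤ S₀ * Real.log Kb := by
    rcases Nat.eq_zero_or_pos (Fintype.card Ω) with h | h
    · rw [h]
      simp only [Nat.cast_zero, Real.log_zero, mul_zero]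
      positivity
    · have h1 : (1:ℝ) ≤ (Fintype.card Ω : ℝ) := by exact_mod_cast h
      have hlog : 0 ≤ Real.log (Fintype.card Ω) := Real.log_nonneg h1
      calc S * Real.log (Fintype.card Ω) ≤ S₀ * Real.log (Fintype.card Ω) :=
            mul_le_mul_of_nonneg_right hS hlog
        _ ≤ S₀ * Real.log Kb :=
            mul_le_mul_of_nonneg_left (Real.log_le_log (by linarith) hcard) hS0.le
  have t2 : - (S * Real.log S) ≤ - (S₀ * Real.log S₀) := by
    have := negMulLog_mono hSnn hS hS₀e
    simp only [Real.negMulLog, neg_mul] at this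
    linarith
  linarith

end TVMutInfAux

set_option maxHeartbeats 2000000 in
open TVMutInfAux Real in
/-- **Exponentially small total variation gives exponentially small difference of
mutual informations.**  Let `X, Y` be finite and `μ_n, ν_n` PMFs on `X^n × Y^n`.  If there
are `β₁ > 0` and `n₁` with `‖μ_n − ν_n‖_TV ≤ e^{−n β₁}` for all `n > n₁`, then there are
`β₂ > 0` and `n₂` with `|I_{μ_n}(X^n;Y^n) − I_{ν_n}(X^n;Y^n)| ≤ e^{−n β₂}` for all `n > n₂`. -/
theorem mutInf_diff_exp_small_of_tv_exp_small
    {X Y : Type*} [Fintype X] [Fintype Y]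
    (μ ν : (n : ℕ) → (Fin n → X) × (Fin n → Y) → ℝ)
    (hμ : ∀ n, IsPMF (μ n)) (hν : ∀ n, IsPMF (ν n))
    (β₁ : ℝ) (hβ₁ : 0 < β₁) (n₁ : ℕ)
    (htv : ∀ n > n₁, tvDist (μ n) (ν n) ≤ Real.exp (-(n * β₁))) :
    ∃ β₂ > (0 : ℝ), ∃ n₂ : ℕ, ∀ n > n₂,
      |mutInf (μ n) - mutInf (ν n)| ≤ Real.exp (-(n * β₂)) := by
  rcases Nat.eq_zero_or_pos (Fintype.card X * Fintype.card Y) with hc | hc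
  · -- degenerate: one of the alphabets is empty; hypotheses are contradictory for n ≥ 1
    refine ⟨β₁, hβ₁, 0, fun n hn => ?_⟩
    exfalso
    have hXY : Fintype.card X = 0 ∨ Fintype.card Y = 0 := Nat.mul_eq_zero.mp hc
    have hempty : IsEmpty ((Fin n → X) × (Fin n → Y)) := by
      rcases hXY with h | h
      · have : IsEmpty X := Fintype.card_eq_zero_iff.mp h
        have : IsEmpty (Fin n → X) := by
          rw [isEmpty_pi]
          exact ⟨⟨0, hn⟩, this⟩
        exact Prod.isEmpty_left
      · have : IsEmpty Y := Fintype.card_eq_zero_iff.mp h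
        have : IsEmpty (Fin n → Y) := by
          rw [isEmpty_pi]
          exact ⟨⟨0, hn⟩, this⟩
        exact Prod.isEmpty_right
    have := (hμ n).2
    rw [@Finset.univ_eq_empty _ _ hempty, Finset.sum_empty] at this
    norm_num at this
  · -- main case
    have hXpos : 0 < Fintype.card X := by
      rcases Nat.eq_zero_or_pos (Fintype.card X) with h | h
      · rw [h] at hc; simp at hc
      · exact h
    have hYpos : 0 < Fintype.card Y := by
      rcases Nat.eq_zero_or_pos (Fintype.card Y) with h | h
      · rw [h, Nat.mul_zero] at hc; simp at hc
      · exact h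
    set M : ℝ := ((Fintype.card X * Fintype.card Y : ℕ) : ℝ) with hMdef
    have hM1 : (1:ℝ) ≤ M := by
      have : 1 ≤ Fintype.card X * Fintype.card Y := hc
      rw [hMdef]; exact_mod_cast this
    set L : ℝ := Real.log M with hLdef
    have hL0 : 0 ≤ L := Real.log_nonneg hM1
    set C : ℝ := 6 * (1 + L + β₁) with hCdef
    have hC0 : 0 < C := by nlinarith
    refine ⟨β₁ / 2, by positivity, n₁ + 1 + ⌈16 * C / β₁ ^ 2⌉₊ + ⌈3 / β₁⌉₊, fun n hn => ?_⟩
    have hn1 : n₁ < n := by omega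
    have hnge1 : (1:ℝ) ≤ (n:ℝ) := by exact_mod_cast Nat.one_le_iff_ne_zero.mpr (by omega)
    have hn16 : 16 * C / β₁ ^ 2 ≤ (n : ℝ) := by
      refine (Nat.le_ceil _).trans ?_
      exact_mod_cast Nat.le_of_lt (by omega : ⌈16 * C / β₁ ^ 2⌉₊ < n)
    have hn3 : 3 / β₁ ≤ (n : ℝ) := by
      refine (Nat.le_ceil _).trans ?_
      exact_mod_cast Nat.le_of_lt (by omega : ⌈3 / β₁⌉₊ < n)
    have hnb3 : 3 ≤ (n:ℝ) * β₁ := by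
      rw [div_le_iff₀ hβ₁] at hn3; linarith
    set E : ℝ := Real.exp (-((n:ℝ) * β₁)) with hEdef
    have hEpos : 0 < E := Real.exp_pos _
    set S₀ : ℝ := 2 * E with hS₀def
    have hS0pos : 0 < S₀ := by positivity
    have hS₀e : S₀ ≤ Real.exp (-1) := by
      have h2 : (2:ℝ) ≤ Real.exp ((n:ℝ)*β₁ - 1) := by
        have := Real.add_one_le_exp ((n:ℝ)*β₁ - 1)
        linarith
      calc S₀ = 2 * Real.exp (-((n:ℝ)*β₁)) := rfl
        _ ≤ Real.exp ((n:ℝ)*β₁ - 1) * Real.exp (-((n:ℝ)*β₁)) :=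
            mul_le_mul_of_nonneg_right h2 (Real.exp_pos _).le
        _ = Real.exp (-1) := by rw [← Real.exp_add]; congr 1; ring
    have hSjoint : ∑ ab, |μ n ab - ν n ab| ≤ S₀ := by
      have := htv n hn1
      rw [tvDist] at this
      rw [hS₀def, hEdef]
      linarith
    have hcprod : Fintype.card ((Fin n → X) × (Fin n → Y))
        = Fintype.card X ^ n * Fintype.card Y ^ n := by
      rw [Fintype.card_prod, Fintype.card_fun, Fintype.card_fun, Fintype.card_fin]
    have hKjoint : (Fintype.card ((Fin n → X) × (Fin n → Y)) : ℝ) ≤ M ^ n := by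
      rw [hcprod, hMdef]
      push_cast
      rw [mul_pow]
    have hKX : (Fintype.card (Fin n → X) : ℝ) ≤ M ^ n := by
      rw [Fintype.card_fun, Fintype.card_fin, hMdef]
      have : Fintype.card X ^ n ≤ (Fintype.card X * Fintype.card Y) ^ n :=
        Nat.pow_le_pow_left (Nat.le_mul_of_pos_right _ hYpos) n
      push_cast
      exact_mod_cast this
    have hKY : (Fintype.card (Fin n → Y) : ℝ) ≤ M ^ n := by
      rw [Fintype.card_fun, Fintype.card_fin, hMdef]
      have : Fintype.card Y ^ n ≤ (Fintype.card X * Fintype.card Y) ^ n :=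
        Nat.pow_le_pow_left (Nat.le_mul_of_pos_left _ hXpos) n
      push_cast
      exact_mod_cast this
    have hM1n : (1:ℝ) ≤ M ^ n := one_le_pow₀ hM1
    set B : ℝ := S₀ + S₀ * Real.log (M ^ n) - S₀ * Real.log S₀ with hBdef
    have E1 := ent_diff_bound (isPMF_margFst (hμ n)) (isPMF_margFst (hν n)) hM1n hKX
      ((tv_margFst _ _).trans hSjoint) hS0pos hS₀e
    have E2 := ent_diff_bound (isPMF_margSnd (hμ n)) (isPMF_margSnd (hν n)) hM1n hKY
      ((tv_margSnd _ _).trans hSjoint) hS0pos hS₀e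
    have E3 := ent_diff_bound (hμ n) (hν n) hM1n hKjoint hSjoint hS0pos hS₀e
    have tri : |mutInf (μ n) - mutInf (ν n)| ≤ 3 * B := by
      rw [mutInf_eq_ent _ (hμ n).1, mutInf_eq_ent _ (hν n).1]
      have habs : |(ent (margFst (μ n)) + ent (margSnd (μ n)) - ent (μ n))
            - (ent (margFst (ν n)) + ent (margSnd (ν n)) - ent (ν n))|
          ≤ |ent (margFst (μ n)) - ent (margFst (ν n))|
            + |ent (margSnd (μ n)) - ent (margSnd (ν n))|
            + |ent (ν n) - ent (μ n)| := by
        have : (ent (margFst (μ n)) + ent (margSnd (μ n)) - ent (μ n))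
            - (ent (margFst (ν n)) + ent (margSnd (ν n)) - ent (ν n))
            = (ent (margFst (μ n)) - ent (margFst (ν n)))
              + (ent (margSnd (μ n)) - ent (margSnd (ν n)))
              + (ent (ν n) - ent (μ n)) := by ring
        rw [this]
        exact abs_add_three _ _ _
      rw [abs_sub_comm (ent (ν n)) (ent (μ n))] at habs
      linarith
    have hlogMn : Real.log (M ^ n) = (n:ℝ) * L := by
      rw [hLdef, Real.log_pow]
    have hlogS₀ : Real.log S₀ = Real.log 2 - (n:ℝ) * β₁ := by
      rw [hS₀def, hEdef, Real.log_mul two_ne_zero (Real.exp_pos _).ne', Real.log_exp]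
      ring
    have hlog2 : 0 ≤ Real.log 2 := Real.log_nonneg one_le_two
    have hBle : 3 * B ≤ C * n * E := by
      have k1 : 1 + (n:ℝ)*L + (n:ℝ)*β₁ ≤ (n:ℝ)*(1+L+β₁) := by nlinarith
      have be : B = S₀ * (1 + (n:ℝ)*L - Real.log 2 + (n:ℝ)*β₁) := by
        rw [hBdef, hlogMn, hlogS₀]; ring
      have b1 : B ≤ S₀ * (1 + (n:ℝ)*L + (n:ℝ)*β₁) := by
        rw [be]
        exact mul_le_mul_of_nonneg_left (by linarith) hS0pos.le
      have b2 : S₀ * (1 + (n:ℝ)*L + (n:ℝ)*β₁) ≤ S₀ * ((n:ℝ)*(1+L+β₁)) :=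
        mul_le_mul_of_nonneg_left k1 hS0pos.le
      have b3 : 3 * (S₀ * ((n:ℝ)*(1+L+β₁))) = C * n * E := by
        rw [hS₀def, hCdef]; ring
      linarith
    have hCn : C * n ≤ Real.exp ((n:ℝ)*β₁/2) := by
      have q1 : Real.exp ((n:ℝ)*β₁/2) = Real.exp ((n:ℝ)*β₁/4)^2 := by
        rw [sq, ← Real.exp_add]; congr 1; ring
      have q2 : (n:ℝ)*β₁/4 + 1 ≤ Real.exp ((n:ℝ)*β₁/4) := Real.add_one_le_exp _
      have q0 : 0 ≤ (n:ℝ)*β₁/4 := by positivity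
      have q3 : ((n:ℝ)*β₁/4)^2 ≤ Real.exp ((n:ℝ)*β₁/4)^2 :=
        pow_le_pow_left₀ q0 (by linarith) 2
      have q4 : 16 * C ≤ (n:ℝ) * β₁^2 := by
        rw [div_le_iff₀ (by positivity : (0:ℝ) < β₁^2)] at hn16
        linarith
      have q5 : C * n ≤ ((n:ℝ)*β₁/4)^2 := by
        have := mul_le_mul_of_nonneg_left q4 (by positivity : (0:ℝ) ≤ (n:ℝ))
        nlinarith
      linarith [q1 ▸ q3, q5]
    have hfinal : C * n * E ≤ Real.exp (-((n:ℝ) * (β₁/2))) := by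
      have : Real.exp ((n:ℝ)*β₁/2) * E = Real.exp (-((n:ℝ) * (β₁/2))) := by
        rw [hEdef, ← Real.exp_add]; congr 1; ring
      calc C * n * E ≤ Real.exp ((n:ℝ)*β₁/2) * E := mul_le_mul_of_nonneg_right hCn hEpos.le
        _ = Real.exp (-((n:ℝ) * (β₁/2))) := this
    calc |mutInf (μ n) - mutInf (ν n)| ≤ 3 * B := tri
      _ ≤ C * n * E := hBle
      _ ≤ Real.exp (-((n:ℝ) * (β₁/2))) := hfinal
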